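/- Any solution (V,f) of the Nonlinear reconstruction problem yields a solution of the Decoding problem: setting e_i = y_i − f(g_i), the error vector E = (e_1,…,e_N) has rank weight at most t. -/

import Mathlib

open Polynomial

/-- Evaluation of a θ-polynomial: `P(v) = ∑ p_i θ^i(v)`. -/
noncomputable def skewEval {K L : Type*} [Field K] [Field L] [Algebra K L]
    (θ : L ≃ₐ[K] L) (p : L[X]) (v : L) : L :=
  ∑ i ∈ p.support, p.coeff i * (θ ^ i) v

/-!
A θ-polynomial `P = ∑ p_i θ^i` acts `K`-linearly on `L`, and each error `e_i = y_i - f(g_i)`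
lies in its kernel because `P(y_i) = P(f(g_i))`. That kernel has `K`-dimension at most `deg P`:
if `P(u) = 0` with `u ≠ 0`, then `v ↦ P(u v)` vanishes at `1`, so summation by parts factors it
as `Q ∘ (θ - 1)` with `deg Q = deg P - 1`. Hence `P = Q ∘ (θ - 1) ∘ (u⁻¹ ·)`, the dimension of
the kernel of a composite is subadditive, and `ker (θ - 1)` has dimension at most `1` because
`1` is at most a simple root of the squarefree characteristic polynomial of `θ`.
-/

open Module LinearMap Finset

theorem Polynomial.rootMultiplicity_le_one_of_squarefree {R : Type*} [CommRing R]
    [Nontrivial R] {p : R[X]} (hp : Squarefree p) (a : R) : p.rootMultiplicity a ≤ 1 := by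
  by_contra! h
  have hdvd : (X - C a) * (X - C a) ∣ p := by
    rw [← sq]
    exact (le_rootMultiplicity_iff hp.ne_zero).mp h
  exact not_isUnit_X_sub_C a (hp _ hdvd)

theorem LinearMap.finrank_eigenspace_le_one_of_squarefree {K V : Type*} [Field K]
    [AddCommGroup V] [Module K V] [FiniteDimensional K V] (f : End K V)
    (hf : Squarefree f.charpoly) (μ : K) : finrank K (f.eigenspace μ) ≤ 1 :=
  (f.finrank_eigenspace_le μ).trans (rootMultiplicity_le_one_of_squarefree hf μ)

theorem LinearMap.finrank_ker_comp_le {K U V W : Type*} [Field K] [AddCommGroup U] [Module K U]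
    [AddCommGroup V] [Module K V] [AddCommGroup W] [Module K W] [FiniteDimensional K U]
    [FiniteDimensional K V] (f : U →ₗ[K] V) (g : V →ₗ[K] W) :
    finrank K (ker (g ∘ₗ f)) ≤ finrank K (ker g) + finrank K (ker f) := by
  have h := f.lift_rank_comap_le (ker g)
  rw [← ker_comp, ← finrank_eq_rank, ← finrank_eq_rank, ← finrank_eq_rank] at h
  simpa only [Cardinal.lift_natCast, ← Nat.cast_add, Nat.cast_le] using h

section SkewOp

variable {K L : Type*} [Field K] [Field L] [Algebra K L] (θ : L ≃ₐ[K] L)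

-- Coefficients as a function with an explicit degree bound, so that the induction on `d`
-- needs no polynomial degree bookkeeping.
noncomputable def skewOp (a : ℕ → L) (d : ℕ) : L →ₗ[K] L :=
  ∑ i ∈ range (d + 1), a i • (θ ^ i).toLinearMap

@[simp]
theorem skewOp_apply (a : ℕ → L) (d : ℕ) (v : L) :
    skewOp θ a d v = ∑ i ∈ range (d + 1), a i * (θ ^ i) v := by
  simp [skewOp]

theorem skewEval_eq_skewOp (p : L[X]) (v : L) :
    skewEval θ p v = skewOp θ p.coeff p.natDegree v := by
  rw [skewEval, skewOp_apply]
  refine sum_subset supp_subset_range_natDegree_succ fun i _ hi => ?_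
  rw [notMem_support_iff.mp hi, zero_mul]

theorem skewOp_comp_mulLeft (a : ℕ → L) (d : ℕ) (u : L) :
    skewOp θ a d ∘ₗ mulLeft K u = skewOp θ (fun i => a i * (θ ^ i) u) d := by
  ext v
  simp only [comp_apply, mulLeft_apply, skewOp_apply, map_mul, mul_assoc]

theorem skewOp_eq_comp_sub_one (a : ℕ → L) (d : ℕ) (ha : ∑ i ∈ range (d + 2), a i = 0) :
    skewOp θ a (d + 1) =
      skewOp θ (fun j => -∑ i ∈ range (j + 1), a i) d ∘ₗ (θ.toLinearMap - 1) := by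
  ext v
  have hpow (i : ℕ) : (θ ^ i) (θ v) = (θ ^ (i + 1)) v := by rw [pow_succ, AlgEquiv.mul_apply]
  have hparts := sum_range_by_parts (fun i => (θ ^ i) v) a (d + 2)
  simp only [smul_eq_mul, ha, mul_zero, zero_sub] at hparts
  simp only [skewOp_apply, comp_apply, LinearMap.sub_apply, AlgEquiv.toLinearMap_apply,
    Module.End.one_apply]
  calc ∑ i ∈ range (d + 2), a i * (θ ^ i) v = ∑ i ∈ range (d + 2), (θ ^ i) v * a i :=
        sum_congr rfl fun _ _ => mul_comm _ _
    _ = -∑ i ∈ range (d + 1), ((θ ^ (i + 1)) v - (θ ^ i) v) * ∑ j ∈ range (i + 1), a j :=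
        hparts
    _ = _ := by
      rw [← sum_neg_distrib]
      exact sum_congr rfl fun i _ => by rw [map_sub, hpow]; ring

theorem exists_skewOp_eq_comp_of_mem_ker {a : ℕ → L} {d : ℕ} (ha : a (d + 1) ≠ 0)
    {u : L} (hu : u ≠ 0) (hu_ker : skewOp θ a (d + 1) u = 0) :
    ∃ b : ℕ → L, b d ≠ 0 ∧
      skewOp θ a (d + 1) = skewOp θ b d ∘ₗ ((θ.toLinearMap - 1) ∘ₗ mulLeft K u⁻¹) := by
  set a' : ℕ → L := fun i => a i * (θ ^ i) u
  have ha' : ∑ i ∈ range (d + 2), a' i = 0 := by simpa [a'] using hu_ker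
  have hb : -∑ i ∈ range (d + 1), a' i ≠ 0 := by
    rw [sum_range_succ, add_eq_zero_iff_eq_neg] at ha'
    rw [ha', neg_neg]
    exact mul_ne_zero ha ((_root_.map_ne_zero _).mpr hu)
  refine ⟨fun j => -∑ i ∈ range (j + 1), a' i, hb, ?_⟩
  rw [← LinearMap.comp_assoc, ← skewOp_eq_comp_sub_one θ a' d ha', ← skewOp_comp_mulLeft,
    LinearMap.comp_assoc, ← mulLeft_mul, mul_inv_cancel₀ hu, mulLeft_one, comp_id]

theorem finrank_ker_skewOp_le [FiniteDimensional K L]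
    (hfix : finrank K (ker (θ.toLinearMap - 1)) ≤ 1) {a : ℕ → L} {d : ℕ} (ha : a d ≠ 0) :
    finrank K (ker (skewOp θ a d)) ≤ d := by
  induction d generalizing a with
  | zero =>
    rw [ker_eq_bot'.mpr fun v hv => by simpa [ha] using hv, finrank_bot]
  | succ d ih =>
    by_cases hbot : ker (skewOp θ a (d + 1)) = ⊥
    · rw [hbot, finrank_bot]
      exact Nat.zero_le _
    obtain ⟨u, hu_ker, hu⟩ := Submodule.exists_mem_ne_zero_of_ne_bot hbot
    obtain ⟨b, hb, hfactor⟩ := exists_skewOp_eq_comp_of_mem_ker θ ha hu hu_ker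
    have hmul : ker (mulLeft K u⁻¹) = ⊥ :=
      ker_eq_bot.mpr (mul_right_injective₀ (inv_ne_zero hu))
    rw [hfactor]
    grw [finrank_ker_comp_le, finrank_ker_comp_le, ih hb, hfix, hmul, finrank_bot]

end SkewOp

theorem nonlinear_reconstruction_solves_decoding_general {K L : Type*} [Field K] [Field L]
    [Algebra K L] [FiniteDimensional K L] (θ : L ≃ₐ[K] L)
    (hsf : Squarefree (LinearMap.charpoly θ.toLinearMap))
    {N t : ℕ} (g y : Fin N → L) (V f : L[X])
    (hV : V ≠ 0) (hdV : V.natDegree ≤ t)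
    (hsol : ∀ i, skewEval θ V (y i) = skewEval θ V (skewEval θ f (g i))) :
    Module.finrank K
      (Submodule.span K (Set.range fun i => y i - skewEval θ f (g i))) ≤ t := by
  have hfix : finrank K (ker (θ.toLinearMap - 1)) ≤ 1 := by
    have h := θ.toLinearMap.finrank_eigenspace_le_one_of_squarefree hsf 1
    rwa [Module.End.eigenspace_def, one_smul] at h
  have hker := finrank_ker_skewOp_le θ hfix (leadingCoeff_ne_zero.mpr hV)
  refine (Submodule.finrank_mono ?_).trans (hker.trans hdV)
  rw [Submodule.span_le]
  rintro _ ⟨i, rfl⟩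
  rw [SetLike.mem_coe, mem_ker, map_sub, ← skewEval_eq_skewOp, ← skewEval_eq_skewOp, hsol i,
    sub_self]

/-- Any solution (V,f) of Nonlinear reconstruction yields a solution of Decoding: the
error vector e_i = y_i − f(g_i) has rank weight (K-dimension of the span of its
coordinates) at most t. -/
theorem nonlinear_reconstruction_solves_decoding {K L : Type*} [Field K] [Field L]
    [Algebra K L] [FiniteDimensional K L] (θ : L ≃ₐ[K] L)
    (hsf : Squarefree (LinearMap.charpoly θ.toLinearMap))
    {N k t : ℕ} (g y : Fin N → L) (V f : L[X])
    (hV : V ≠ 0) (hdV : V.natDegree ≤ t) (hdf : f.natDegree < k)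
    (hsol : ∀ i, skewEval θ V (y i) = skewEval θ V (skewEval θ f (g i))) :
    Module.finrank K
      (Submodule.span K (Set.range fun i => y i - skewEval θ f (g i))) ≤ t :=
  nonlinear_reconstruction_solves_decoding_general θ hsf g y V f hV hdV hsol
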